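/- (Huygens' principle for parallel surfaces.) Let T be a norm on ℝ³ differentiable away from 0, Σ ⊆ ℝ² open, X : Σ → ℝ³ a smooth immersion, and ξ : Σ → ℝ³ smooth with T(ξ(p)) = 1 and (fderiv T (ξ(p))) ∘ (fderiv X p) = 0 for all p. Fix t ∈ ℝ and let X̃ := X + t·ξ be the parallel surface. Then for all p ∈ Σ: (a) (fderiv T (ξ(p))) ∘ (fderiv X̃ p) = 0, so ξ is also the Cahn–Hoffman field of X̃; and (b) the congruence Y(p) := (X(p), t) of anisotropic spheres of radius t centered on X is enveloped by X̃, i.e. L((X(p),t) − (X̃(p),0)) = 0 and the derivative of L at the point (X(p),t) − (X̃(p),0) composed with fderiv X̃ p vanishes. -/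

import Mathlib

/-!
Differentiating `T ∘ ξ ≡ 1` shows that `dT(ξ)` kills `dξ`, hence also `dX̃ = dX + t dξ`.
Since `X − X̃ = −tξ` and `T(cx) = |c| T(x)`, the point `(X, t) − (X̃, 0) = (−tξ, t)` lies on the
cone `L = 0`, and `dT` at `−tξ` is `± dT(ξ)`, so `dL` there kills the horizontal vectors `(dX̃ v, 0)`.
For `t = 0` the point is the apex of the cone, where `L` is 2-homogeneous and therefore has
vanishing derivative (also as a junk value, should `L` fail to be differentiable there).
-/

/-- The conical Finsler metric `L(x,t) = T(x)² − t²`. -/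
noncomputable def coneMetric (T : EuclideanSpace ℝ (Fin 3) → ℝ) :
    EuclideanSpace ℝ (Fin 3) × ℝ → ℝ :=
  fun q => (T q.1) ^ 2 - q.2 ^ 2

open ContinuousLinearMap Filter Topology

theorem fderiv_comp_eq_zero_of_eventuallyEq_const {E F G : Type*}
    [NormedAddCommGroup E] [NormedSpace ℝ E] [NormedAddCommGroup F] [NormedSpace ℝ F]
    [NormedAddCommGroup G] [NormedSpace ℝ G] {f : E → F} {g : F → G} {x : E} {c : G}
    (hg : DifferentiableAt ℝ g (f x)) (hf : DifferentiableAt ℝ f x)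
    (h : g ∘ f =ᶠ[𝓝 x] fun _ => c) :
    (fderiv ℝ g (f x)).comp (fderiv ℝ f x) = 0 := by
  rw [← fderiv_comp x hg hf, h.fderiv_eq, fderiv_const_apply]

theorem fderiv_zero_eq_zero_of_sq_homogeneous {E F : Type*}
    [NormedAddCommGroup E] [NormedSpace ℝ E] [NormedAddCommGroup F] [NormedSpace ℝ F]
    {f : E → F} (hf : ∀ (c : ℝ) x, f (c • x) = c ^ 2 • f x) :
    fderiv ℝ f 0 = 0 := by
  by_cases hd : DifferentiableAt ℝ f 0
  · ext u
    have hline : HasDerivAt (fun s : ℝ => f (s • u)) (fderiv ℝ f 0 u) 0 := by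
      simpa [Function.comp_def] using hd.hasFDerivAt.comp_hasDerivAt_of_eq (0 : ℝ)
        ((hasDerivAt_id (0 : ℝ)).smul_const u) (by simp)
    have hquad := (hasDerivAt_pow 2 (0 : ℝ)).smul_const (f u)
    simp only [← hf] at hquad
    simpa using hline.unique hquad
  · exact fderiv_zero_of_not_differentiableAt hd

theorem HasFDerivAt.smul_of_abs_homogeneous {E : Type*}
    [NormedAddCommGroup E] [NormedSpace ℝ E] {T : E → ℝ} {T' : E →L[ℝ] ℝ} {x : E} {c : ℝ}
    (hT : ∀ (c : ℝ) x, T (c • x) = |c| * T x) (hd : HasFDerivAt T T' x) (hc : c ≠ 0) :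
    HasFDerivAt T ((|c| / c) • T') (c • x) := by
  have hT_eq : T = fun y => |c| * T (c⁻¹ • y) := by
    funext y
    rw [hT, abs_inv, mul_inv_cancel_left₀ (abs_ne_zero.2 hc)]
  have hscale : HasFDerivAt (fun y : E => c⁻¹ • y) (c⁻¹ • ContinuousLinearMap.id ℝ E) (c • x) :=
    (hasFDerivAt_id (c • x)).const_smul c⁻¹
  rw [← inv_smul_smul₀ hc x] at hd
  rw [hT_eq]
  refine ((hd.comp (c • x) hscale).const_mul |c|).congr_fderiv ?_
  ext v
  simp [div_eq_mul_inv]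
  ring

theorem coneMetric_smul_mk {T : EuclideanSpace ℝ (Fin 3) → ℝ}
    (hT : ∀ (c : ℝ) x, T (c • x) = |c| * T x) (c : ℝ) (y : EuclideanSpace ℝ (Fin 3)) (s : ℝ) :
    coneMetric T (c • y, s) = c ^ 2 * T y ^ 2 - s ^ 2 := by
  rw [coneMetric, hT, mul_pow, sq_abs]

theorem coneMetric_smul (T : EuclideanSpace ℝ (Fin 3) → ℝ)
    (hT : ∀ (c : ℝ) x, T (c • x) = |c| * T x) (c : ℝ) (q : EuclideanSpace ℝ (Fin 3) × ℝ) :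
    coneMetric T (c • q) = c ^ 2 * coneMetric T q := by
  simp only [coneMetric, Prod.smul_fst, Prod.smul_snd, hT, smul_eq_mul, mul_pow, sq_abs]
  ring

theorem hasFDerivAt_coneMetric {T : EuclideanSpace ℝ (Fin 3) → ℝ}
    {T' : EuclideanSpace ℝ (Fin 3) →L[ℝ] ℝ} {y : EuclideanSpace ℝ (Fin 3)}
    (hT : HasFDerivAt T T' y) (s : ℝ) :
    HasFDerivAt (coneMetric T) ((2 * T y) • T'.comp (fst ℝ _ ℝ) - (2 * s) • snd ℝ _ ℝ) (y, s) := by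
  have h1 := (hT.comp (y, s) (hasFDerivAt_fst (𝕜 := ℝ) (p := (y, s)))).pow 2
  have h2 := (hasFDerivAt_snd (𝕜 := ℝ) (p := (y, s))).pow 2
  exact (h1.sub h2).congr_fderiv (by ext <;> simp)

theorem huygens_principle_parallel_surface_general
    (T : EuclideanSpace ℝ (Fin 3) → ℝ)
    (hT2 : ∀ (c : ℝ) (x : EuclideanSpace ℝ (Fin 3)), T (c • x) = |c| * T x)
    (hTdiff : ∀ x : EuclideanSpace ℝ (Fin 3), x ≠ 0 → DifferentiableAt ℝ T x)
    (Ω : Set (EuclideanSpace ℝ (Fin 2))) (hOm : IsOpen Ω)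
    (X : EuclideanSpace ℝ (Fin 2) → EuclideanSpace ℝ (Fin 3))
    (hX : ContDiffOn ℝ (⊤ : ℕ∞) X Ω)
    (ξ : EuclideanSpace ℝ (Fin 2) → EuclideanSpace ℝ (Fin 3))
    (hξsmooth : ContDiffOn ℝ (⊤ : ℕ∞) ξ Ω)
    (hξ1 : ∀ p ∈ Ω, T (ξ p) = 1)
    (horth : ∀ p ∈ Ω, (fderiv ℝ T (ξ p)).comp (fderiv ℝ X p) = 0)
    (t : ℝ) :
    ∀ p ∈ Ω,
      -- (a) ξ is the Cahn–Hoffman field of the parallel surface X̃ = X + t·ξ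
      (fderiv ℝ T (ξ p)).comp (fderiv ℝ (fun q => X q + t • ξ q) p) = 0 ∧
      -- (b) the congruence Y = (X, t) is enveloped by X̃
      coneMetric T ((X p, t) - (X p + t • ξ p, (0 : ℝ))) = 0 ∧
      (fderiv ℝ (coneMetric T) ((X p, t) - (X p + t • ξ p, (0 : ℝ)))).comp
        (fderiv ℝ (fun q => ((X q + t • ξ q, (0 : ℝ)) :
          EuclideanSpace ℝ (Fin 3) × ℝ)) p) = 0 := by
  intro p hp
  have hΩ : Ω ∈ 𝓝 p := hOm.mem_nhds hp
  have hXd : DifferentiableAt ℝ X p := (hX.differentiableOn (by simp)).differentiableAt hΩ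
  have hξd : DifferentiableAt ℝ ξ p := (hξsmooth.differentiableOn (by simp)).differentiableAt hΩ
  have hparallel : DifferentiableAt ℝ (fun q => X q + t • ξ q) p := hXd.add (hξd.fun_const_smul t)
  have hT_zero : T 0 = 0 := by simpa using hT2 0 0
  have hξ0 : ξ p ≠ 0 := fun h => by simpa [h, hT_zero] using hξ1 p hp
  have hξ_tangent : (fderiv ℝ T (ξ p)).comp (fderiv ℝ ξ p) = 0 :=
    fderiv_comp_eq_zero_of_eventuallyEq_const (hTdiff _ hξ0) hξd (eventually_of_mem hΩ hξ1)
  have ha : (fderiv ℝ T (ξ p)).comp (fderiv ℝ (fun q => X q + t • ξ q) p) = 0 := by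
    rw [fderiv_fun_add hXd (hξd.fun_const_smul t), fderiv_fun_const_smul hξd, comp_add, comp_smul,
      horth p hp, hξ_tangent, smul_zero, add_zero]
  have hpt : ((X p, t) - (X p + t • ξ p, (0 : ℝ)) : EuclideanSpace ℝ (Fin 3) × ℝ) =
      ((-t) • ξ p, t) := by
    simp [neg_smul]
  refine ⟨ha, ?_, ?_⟩
  · rw [hpt, coneMetric_smul_mk hT2, hξ1 p hp]
    ring
  · rw [hpt, hparallel.fderiv_prodMk (differentiableAt_const 0), fderiv_const_apply]
    rcases eq_or_ne t 0 with rfl | ht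
    · rw [neg_zero, zero_smul, Prod.mk_zero_zero,
        fderiv_zero_eq_zero_of_sq_homogeneous (coneMetric_smul T hT2), zero_comp]
    · rw [(hasFDerivAt_coneMetric
        ((hTdiff _ hξ0).hasFDerivAt.smul_of_abs_homogeneous hT2 (neg_ne_zero.2 ht)) t).fderiv]
      simp only [sub_comp, smul_comp, comp_assoc, fst_comp_prod, snd_comp_prod, ha, smul_zero,
        sub_zero]

/-- Huygens' principle for parallel surfaces: if `ξ` is the
Cahn–Hoffman field of `X`, then (a) `ξ` is also the Cahn–Hoffman field of the
parallel surface `X̃ = X + t·ξ`, and (b) the congruence `Y = (X, t)` of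
anisotropic spheres of radius `t` centered on `X` is enveloped by `X̃`. -/
theorem huygens_principle_parallel_surface
    (T : EuclideanSpace ℝ (Fin 3) → ℝ)
    (hT0 : ∀ x, 0 ≤ T x)
    (hT1 : ∀ x, T x = 0 ↔ x = 0)
    (hT2 : ∀ (c : ℝ) (x : EuclideanSpace ℝ (Fin 3)), T (c • x) = |c| * T x)
    (hT3 : ∀ x y, T (x + y) ≤ T x + T y)
    (hTdiff : ∀ x : EuclideanSpace ℝ (Fin 3), x ≠ 0 → DifferentiableAt ℝ T x)
    (Ω : Set (EuclideanSpace ℝ (Fin 2))) (hOm : IsOpen Ω)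
    (X : EuclideanSpace ℝ (Fin 2) → EuclideanSpace ℝ (Fin 3))
    (hX : ContDiffOn ℝ (⊤ : ℕ∞) X Ω)
    (hXimm : ∀ p ∈ Ω, Function.Injective (fderiv ℝ X p))
    (ξ : EuclideanSpace ℝ (Fin 2) → EuclideanSpace ℝ (Fin 3))
    (hξsmooth : ContDiffOn ℝ (⊤ : ℕ∞) ξ Ω)
    (hξ1 : ∀ p ∈ Ω, T (ξ p) = 1)
    (horth : ∀ p ∈ Ω, (fderiv ℝ T (ξ p)).comp (fderiv ℝ X p) = 0)
    (t : ℝ) :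
    ∀ p ∈ Ω,
      -- (a) ξ is the Cahn–Hoffman field of the parallel surface X̃ = X + t·ξ
      (fderiv ℝ T (ξ p)).comp (fderiv ℝ (fun q => X q + t • ξ q) p) = 0 ∧
      -- (b) the congruence Y = (X, t) is enveloped by X̃
      coneMetric T ((X p, t) - (X p + t • ξ p, (0 : ℝ))) = 0 ∧
      (fderiv ℝ (coneMetric T) ((X p, t) - (X p + t • ξ p, (0 : ℝ)))).comp
        (fderiv ℝ (fun q => ((X q + t • ξ q, (0 : ℝ)) :
          EuclideanSpace ℝ (Fin 3) × ℝ)) p) = 0 :=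
  huygens_principle_parallel_surface_general T hT2 hTdiff Ω hOm X hX ξ hξsmooth hξ1 horth t
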